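/- arXiv:2211.04650 — 2 statements merged into one kernel-verified Lean document; each statement's English description precedes it below -/
import Mathlib

section
/- Let κ > 0 and let φ₁, φ₂ be continuous functions on a ray {r e^{iθ} : 0 < r} ⊂ ℂ satisfying |φᵢ(ξ)| ≤ Cᵢ |ξ|^{sᵢ−κ} e^{c|ξ|^κ}/Γ(sᵢ/κ) with sᵢ > 0, c ≥ 0, Cᵢ ≥ 0. Then their κ-convolution (φ₁ *_κ φ₂)(ξ) = ∫₀^{ξ} φ₁((ξ^κ − η^κ)^{1/κ}) φ₂(η) d(η^κ), taken along the ray, satisfies |(φ₁ *_κ φ₂)(ξ)| ≤ C₁C₂ |ξ|^{s₁+s₂−κ} e^{c|ξ|^κ}/Γ((s₁+s₂)/κ). -/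
/-!
Bound the integrand pointwise by the growth hypotheses. Writing `T = t^κ`, `u = r^κ`,
`a = s₁/κ`, `b = s₂/κ`, the exponential weights combine as `e^{c(T-u)} e^{cu} = e^{cT}`, and the
substitution `u = r^κ` (absorbing the Jacobian `d(r^κ)`) turns the remaining integral into the
Beta integral `∫₀ᵀ (T-u)^{a-1} u^{b-1} du = T^{a+b-1} Γ(a)Γ(b)/Γ(a+b)`; the factor
`Γ(a)Γ(b)` cancels against the normalisations of the two hypotheses.
-/

open Real Complex MeasureTheory Set

section RpowSubstitution

variable {E : Type*} [NormedAddCommGroup E] [NormedSpace ℝ E] {κ t : ℝ}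

lemma image_rpow_Ioo (hκ : 0 < κ) (ht : 0 ≤ t) :
    (fun x : ℝ => x ^ κ) '' Ioo 0 t = Ioo 0 (t ^ κ) := by
  ext y
  constructor
  · rintro ⟨x, ⟨hx0, hxt⟩, rfl⟩
    exact ⟨rpow_pos_of_pos hx0 κ, rpow_lt_rpow hx0.le hxt hκ⟩
  · rintro ⟨hy0, hyt⟩
    refine ⟨y ^ κ⁻¹, ⟨rpow_pos_of_pos hy0 _, ?_⟩, rpow_inv_rpow hy0.le hκ.ne'⟩
    simpa [rpow_rpow_inv ht hκ.ne'] using rpow_lt_rpow hy0.le hyt (inv_pos.2 hκ)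

lemma hasDerivWithinAt_rpow_Ioo {x : ℝ} (hx : x ∈ Ioo 0 t) :
    HasDerivWithinAt (fun x : ℝ => x ^ κ) (κ * x ^ (κ - 1)) (Ioo 0 t) x :=
  (hasDerivAt_rpow_const (Or.inl hx.1.ne')).hasDerivWithinAt

lemma injOn_rpow_Ioo (hκ : κ ≠ 0) : InjOn (fun x : ℝ => x ^ κ) (Ioo 0 t) :=
  (rpow_left_injOn hκ).mono fun _ hx => hx.1.le

lemma abs_mul_rpow_sub_one_of_mem_Ioo (hκ : 0 < κ) {x : ℝ} (hx : x ∈ Ioo 0 t) :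
    |κ * x ^ (κ - 1)| = κ * x ^ (κ - 1) :=
  abs_of_nonneg (mul_pos hκ (rpow_pos_of_pos hx.1 _)).le

theorem intervalIntegral.integral_comp_rpow (hκ : 0 < κ) (ht : 0 ≤ t) (g : ℝ → E) :
    ∫ x in (0:ℝ)..t, (κ * x ^ (κ - 1)) • g (x ^ κ) = ∫ y in (0:ℝ)..t ^ κ, g y := by
  rw [intervalIntegral.integral_of_le ht, intervalIntegral.integral_of_le (by positivity),
    integral_Ioc_eq_integral_Ioo, integral_Ioc_eq_integral_Ioo, ← image_rpow_Ioo hκ ht,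
    integral_image_eq_integral_abs_deriv_smul measurableSet_Ioo
      (fun _ => hasDerivWithinAt_rpow_Ioo) (injOn_rpow_Ioo hκ.ne')]
  refine setIntegral_congr_fun measurableSet_Ioo fun x hx => ?_
  rw [abs_mul_rpow_sub_one_of_mem_Ioo hκ hx]

theorem IntervalIntegrable.comp_rpow (hκ : 0 < κ) (ht : 0 ≤ t) {g : ℝ → E}
    (hg : IntervalIntegrable g volume 0 (t ^ κ)) :
    IntervalIntegrable (fun x => (κ * x ^ (κ - 1)) • g (x ^ κ)) volume 0 t := by
  rw [intervalIntegrable_iff_integrableOn_Ioo_of_le ht]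
  rw [intervalIntegrable_iff_integrableOn_Ioo_of_le (by positivity), ← image_rpow_Ioo hκ ht,
    integrableOn_image_iff_integrableOn_abs_deriv_smul measurableSet_Ioo
      (fun _ => hasDerivWithinAt_rpow_Ioo) (injOn_rpow_Ioo hκ.ne')] at hg
  refine hg.congr_fun (fun x hx => ?_) measurableSet_Ioo
  dsimp only
  rw [abs_mul_rpow_sub_one_of_mem_Ioo hκ hx]

end RpowSubstitution

section Beta

variable {a b T : ℝ}

lemma intervalIntegrable_sub_rpow_mul_rpow_left (a : ℝ) (hb : 0 < b) (hT : 0 < T) :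
    IntervalIntegrable (fun u => (T - u) ^ (a - 1) * u ^ (b - 1)) volume 0 (T / 2) := by
  have hcont : ContinuousOn (fun u : ℝ => (T - u) ^ (a - 1)) (uIcc 0 (T / 2)) := by
    refine (continuousOn_const.sub continuousOn_id).rpow_const fun u hu => Or.inl ?_
    rw [uIcc_of_le (by positivity)] at hu
    simp only [Pi.sub_apply, id]
    linarith [hu.2]
  simpa only [mul_comm] using
    (intervalIntegral.intervalIntegrable_rpow' (by linarith)).mul_continuousOn hcont

theorem intervalIntegrable_sub_rpow_mul_rpow (ha : 0 < a) (hb : 0 < b) (hT : 0 < T) :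
    IntervalIntegrable (fun u => (T - u) ^ (a - 1) * u ^ (b - 1)) volume 0 T := by
  refine (intervalIntegrable_sub_rpow_mul_rpow_left a hb hT).trans ?_
  have := ((intervalIntegrable_sub_rpow_mul_rpow_left b ha hT).comp_sub_left T).symm
  rw [sub_zero, sub_half] at this
  simpa only [sub_sub_cancel, mul_comm] using this

theorem integral_sub_rpow_mul_rpow (ha : 0 < a) (hb : 0 < b) (hT : 0 < T) :
    ∫ u in (0:ℝ)..T, (T - u) ^ (a - 1) * u ^ (b - 1)
      = T ^ (a + b - 1) * ProbabilityTheory.beta a b := by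
  apply Complex.ofReal_injective
  have hcongr : ∀ u ∈ uIcc 0 T, (((T - u) ^ (a - 1) * u ^ (b - 1) : ℝ) : ℂ)
      = (u : ℂ) ^ ((b : ℂ) - 1) * ((T : ℂ) - u) ^ ((a : ℂ) - 1) := by
    intro u hu
    rw [uIcc_of_le hT.le] at hu
    push_cast [ofReal_cpow hu.1, ofReal_cpow (sub_nonneg.2 hu.2)]
    ring
  rw [← intervalIntegral.integral_ofReal, intervalIntegral.integral_congr hcongr,
    Complex.betaIntegral_scaled b a hT, Complex.betaIntegral_symm,
    Complex.betaIntegral_eq_Gamma_mul_div _ _ (by simpa) (by simpa), ProbabilityTheory.beta]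
  push_cast [ofReal_cpow hT.le, ← Complex.Gamma_ofReal]
  ring_nf

end Beta

lemma rpow_sub_eq_rpow_rpow_div_sub_one {x κ : ℝ} (hx : 0 ≤ x) (hκ : κ ≠ 0) (s : ℝ) :
    x ^ (s - κ) = (x ^ κ) ^ (s / κ - 1) := by
  rw [← rpow_mul hx]
  congr 1
  field_simp

lemma norm_exp_mul_I_mul_cpow_sub_one {κ θ r : ℝ} (hκ : 0 ≤ κ) (hr : 0 < r) :
    ‖Complex.exp (κ * θ * I) * ((κ : ℂ) * (r : ℂ) ^ ((κ : ℂ) - 1))‖ = κ * r ^ (κ - 1) := by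
  rw [norm_mul, ← ofReal_mul, norm_exp_ofReal_mul_I, one_mul, norm_mul,
    norm_cpow_eq_rpow_re_of_pos hr, Complex.norm_of_nonneg hκ]
  simp

lemma norm_kappaConv_integrand_le {κ θ s₁ s₂ c C₁ C₂ t r : ℝ} (hκ : 0 < κ) {φ₁ φ₂ : ℂ → ℂ}
    (hb₁ : ∀ r : ℝ, 0 < r →
      ‖φ₁ (r * Complex.exp (θ * Complex.I))‖ ≤ C₁ * r ^ (s₁ - κ) * Real.exp (c * r ^ κ)
        / Real.Gamma (s₁ / κ))
    (hb₂ : ∀ r : ℝ, 0 < r →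
      ‖φ₂ (r * Complex.exp (θ * Complex.I))‖ ≤ C₂ * r ^ (s₂ - κ) * Real.exp (c * r ^ κ)
        / Real.Gamma (s₂ / κ))
    (hr : r ∈ Ioo 0 t) :
    ‖φ₁ (((t ^ κ - r ^ κ) ^ (1 / κ) : ℝ) * Complex.exp (θ * Complex.I))
        * φ₂ ((r : ℝ) * Complex.exp (θ * Complex.I))
        * Complex.exp (κ * θ * Complex.I) * ((κ : ℂ) * (r : ℂ) ^ ((κ : ℂ) - 1))‖
      ≤ C₁ * C₂ * Real.exp (c * t ^ κ) / (Real.Gamma (s₁ / κ) * Real.Gamma (s₂ / κ))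
        * ((κ * r ^ (κ - 1)) * ((t ^ κ - r ^ κ) ^ (s₁ / κ - 1) * (r ^ κ) ^ (s₂ / κ - 1))) := by
  obtain ⟨hr0, hrt⟩ := hr
  have hsub : 0 < t ^ κ - r ^ κ := sub_pos.2 (rpow_lt_rpow hr0.le hrt hκ)
  set ρ := (t ^ κ - r ^ κ) ^ (1 / κ)
  have hρ : 0 < ρ := rpow_pos_of_pos hsub _
  have hρκ : ρ ^ κ = t ^ κ - r ^ κ := by
    rw [← rpow_mul hsub.le, one_div_mul_cancel hκ.ne', rpow_one]
  have h₁ := hb₁ ρ hρ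
  rw [rpow_sub_eq_rpow_rpow_div_sub_one hρ.le hκ.ne', hρκ] at h₁
  have h₂ := hb₂ r hr0
  rw [rpow_sub_eq_rpow_rpow_div_sub_one hr0.le hκ.ne'] at h₂
  have hexp : Real.exp (c * (t ^ κ - r ^ κ)) * Real.exp (c * r ^ κ) = Real.exp (c * t ^ κ) := by
    rw [← Real.exp_add]
    ring_nf
  rw [mul_assoc (_ * _), norm_mul, norm_exp_mul_I_mul_cpow_sub_one hκ.le hr0, norm_mul]
  calc ‖φ₁ (ρ * Complex.exp (θ * I))‖ * ‖φ₂ (r * Complex.exp (θ * I))‖ * (κ * r ^ (κ - 1))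
      ≤ C₁ * (t ^ κ - r ^ κ) ^ (s₁ / κ - 1) * Real.exp (c * (t ^ κ - r ^ κ))
          / Real.Gamma (s₁ / κ)
        * (C₂ * (r ^ κ) ^ (s₂ / κ - 1) * Real.exp (c * r ^ κ) / Real.Gamma (s₂ / κ))
        * (κ * r ^ (κ - 1)) :=
        mul_le_mul_of_nonneg_right
          (mul_le_mul h₁ h₂ (norm_nonneg _) ((norm_nonneg _).trans h₁))
          (mul_pos hκ (rpow_pos_of_pos hr0 _)).le
    _ = _ := by
        rw [← hexp]
        field_simp

theorem stmt_1_general (κ s₁ s₂ c C₁ C₂ : ℝ) (θ : ℝ)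
    (hκ : 0 < κ) (hs₁ : 0 < s₁) (hs₂ : 0 < s₂)
    (φ₁ φ₂ : ℂ → ℂ)
    (hb₁ : ∀ r : ℝ, 0 < r →
      ‖φ₁ (r * Complex.exp (θ * Complex.I))‖ ≤ C₁ * r ^ (s₁ - κ) * Real.exp (c * r ^ κ)
        / Real.Gamma (s₁ / κ))
    (hb₂ : ∀ r : ℝ, 0 < r →
      ‖φ₂ (r * Complex.exp (θ * Complex.I))‖ ≤ C₂ * r ^ (s₂ - κ) * Real.exp (c * r ^ κ)
        / Real.Gamma (s₂ / κ)) :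
    ∀ t : ℝ, 0 < t →
      ‖∫ r in (0:ℝ)..t,
          φ₁ (((t ^ κ - r ^ κ) ^ (1 / κ) : ℝ) * Complex.exp (θ * Complex.I))
            * φ₂ ((r : ℝ) * Complex.exp (θ * Complex.I))
            * Complex.exp (κ * θ * Complex.I) * ((κ : ℂ) * (r : ℂ) ^ ((κ : ℂ) - 1))‖
        ≤ C₁ * C₂ * t ^ (s₁ + s₂ - κ) * Real.exp (c * t ^ κ)
            / Real.Gamma ((s₁ + s₂) / κ) := by
  intro t ht
  have hT : 0 < t ^ κ := rpow_pos_of_pos ht κ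
  have ha : 0 < s₁ / κ := div_pos hs₁ hκ
  have hb : 0 < s₂ / κ := div_pos hs₂ hκ
  set K := C₁ * C₂ * Real.exp (c * t ^ κ) / (Real.Gamma (s₁ / κ) * Real.Gamma (s₂ / κ)) with hK
  have hbound := (IntervalIntegrable.comp_rpow hκ ht.le
    (intervalIntegrable_sub_rpow_mul_rpow ha hb hT)).const_mul K
  calc _ ≤ ∫ r in (0:ℝ)..t, K * ((κ * r ^ (κ - 1)) •
          ((t ^ κ - r ^ κ) ^ (s₁ / κ - 1) * (r ^ κ) ^ (s₂ / κ - 1))) := by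
        refine intervalIntegral.norm_integral_le_of_norm_le ht.le ?_ hbound
        -- at `r = t` the first factor is evaluated at the vertex, where no bound is assumed
        filter_upwards [Measure.ae_ne volume t] with r hrt hr
        exact norm_kappaConv_integrand_le hκ hb₁ hb₂ ⟨hr.1, lt_of_le_of_ne hr.2 hrt⟩
    _ = K * ∫ u in (0:ℝ)..t ^ κ, (t ^ κ - u) ^ (s₁ / κ - 1) * u ^ (s₂ / κ - 1) := by
        rw [intervalIntegral.integral_const_mul, intervalIntegral.integral_comp_rpow hκ ht.le
          (fun u => (t ^ κ - u) ^ (s₁ / κ - 1) * u ^ (s₂ / κ - 1))]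
    _ = _ := by
        rw [integral_sub_rpow_mul_rpow ha hb hT, ProbabilityTheory.beta, ← add_div,
          ← rpow_sub_eq_rpow_rpow_div_sub_one ht.le hκ.ne']
        have hΓa := (Real.Gamma_pos_of_pos ha).ne'
        have hΓb := (Real.Gamma_pos_of_pos hb).ne'
        rw [hK]
        field_simp

/-- Convolution estimate (Lemma on κ-convolution): if φ₁, φ₂ are continuous on the ray
{r e^{iθ} : r > 0} and satisfy |φᵢ(ξ)| ≤ Cᵢ|ξ|^{sᵢ−κ}e^{c|ξ|^κ}/Γ(sᵢ/κ), then the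
κ-convolution along the ray satisfies the corresponding bound with s₁ + s₂. -/
theorem stmt_1 (κ s₁ s₂ c C₁ C₂ : ℝ) (θ : ℝ)
    (hκ : 0 < κ) (hs₁ : 0 < s₁) (hs₂ : 0 < s₂) (hc : 0 ≤ c) (hC₁ : 0 ≤ C₁) (hC₂ : 0 ≤ C₂)
    (φ₁ φ₂ : ℂ → ℂ)
    (hcont₁ : ContinuousOn φ₁ {ξ : ℂ | ∃ r : ℝ, 0 < r ∧ ξ = r * Complex.exp (θ * Complex.I)})
    (hcont₂ : ContinuousOn φ₂ {ξ : ℂ | ∃ r : ℝ, 0 < r ∧ ξ = r * Complex.exp (θ * Complex.I)})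
    (hb₁ : ∀ r : ℝ, 0 < r →
      ‖φ₁ (r * Complex.exp (θ * Complex.I))‖ ≤ C₁ * r ^ (s₁ - κ) * Real.exp (c * r ^ κ)
        / Real.Gamma (s₁ / κ))
    (hb₂ : ∀ r : ℝ, 0 < r →
      ‖φ₂ (r * Complex.exp (θ * Complex.I))‖ ≤ C₂ * r ^ (s₂ - κ) * Real.exp (c * r ^ κ)
        / Real.Gamma (s₂ / κ)) :
    ∀ t : ℝ, 0 < t →
      ‖∫ r in (0:ℝ)..t,
          φ₁ (((t ^ κ - r ^ κ) ^ (1 / κ) : ℝ) * Complex.exp (θ * Complex.I))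
            * φ₂ ((r : ℝ) * Complex.exp (θ * Complex.I))
            * Complex.exp (κ * θ * Complex.I) * ((κ : ℂ) * (r : ℂ) ^ ((κ : ℂ) - 1))‖
        ≤ C₁ * C₂ * t ^ (s₁ + s₂ - κ) * Real.exp (c * t ^ κ)
            / Real.Gamma ((s₁ + s₂) / κ) :=
  stmt_1_general κ s₁ s₂ c C₁ C₂ θ hκ hs₁ hs₂ φ₁ φ₂ hb₁ hb₂
end

section
/- Let κ > 0, c ≥ 0, A > 0. Define for m ≥ 1 the functions g_m(ξ) = A^m |ξ|^{m−κ} e^{c|ξ|^κ}/Γ(m/κ) on (0, ∞). Then the series Σ_{m=1}^∞ g_m(ξ) converges for every ξ > 0, and there exist constants M > 0 and c' ≥ c such that Σ_{m=1}^∞ g_m(ξ) ≤ M |ξ|^{1−κ} e^{c'|ξ|^κ} for all ξ > 0. -/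
/-! Bounding the Gamma integral from below on `(u, ∞)` gives `Γ(s + 1) ≥ u ^ s e ^ (-u)`, hence
`T ^ m / Γ(m / κ) ≤ (m / κ) e ^ (T ^ κ)`. After factoring out `ξ ^ (1 - κ)`, the `m`-th term carries
`A (A ξ) ^ (m - 1) ≤ T ^ m` with `T = A max 1 ξ`; applying the estimate to `2 T` leaves a factor
`m 2 ^ (-m)`, whose sum is `2`, while `(2 T) ^ κ ≤ (2 A) ^ κ (1 + ξ ^ κ)` costs only an increase of
`c` by `(2 A) ^ κ`. -/

open Real MeasureTheory Set

namespace Real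

theorem rpow_mul_exp_neg_le_Gamma_add_one {s u : ℝ} (hs : 0 ≤ s) (hu : 0 ≤ u) :
    u ^ s * exp (-u) ≤ Gamma (s + 1) := by
  have hint : IntegrableOn (fun x : ℝ => exp (-x) * x ^ s) (Ioi 0) := by
    simpa using GammaIntegral_convergent (s := s + 1) (by linarith)
  rw [Gamma_eq_integral (by linarith), add_sub_cancel_right]
  calc u ^ s * exp (-u) = ∫ x in Ioi u, exp (-x) * u ^ s := by
        rw [integral_mul_const, integral_exp_neg_Ioi, mul_comm]
    _ ≤ ∫ x in Ioi u, exp (-x) * x ^ s := by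
        have hexp : IntegrableOn (fun x : ℝ => exp (-x)) (Ioi u) := by
          simpa using exp_neg_integrableOn_Ioi u one_pos
        refine setIntegral_mono_on (hexp.mul_const _) (hint.mono_set (Ioi_subset_Ioi hu))
          measurableSet_Ioi fun x hx => ?_
        exact mul_le_mul_of_nonneg_left (rpow_le_rpow hu hx.le hs) (exp_nonneg _)
    _ ≤ ∫ x in Ioi 0, exp (-x) * x ^ s := by
        refine setIntegral_mono_set hint ?_ (.of_forall (Ioi_subset_Ioi hu))
        filter_upwards [ae_restrict_mem measurableSet_Ioi] with x hx
        exact mul_nonneg (exp_nonneg _) (rpow_nonneg hx.le s)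

theorem rpow_div_Gamma_le {s u : ℝ} (hs : 0 < s) (hu : 0 ≤ u) :
    u ^ s / Gamma s ≤ s * exp u := by
  have h := rpow_mul_exp_neg_le_Gamma_add_one hs.le hu
  rw [Gamma_add_one hs.ne', exp_neg, ← div_eq_mul_inv, div_le_iff₀ (exp_pos u)] at h
  rw [div_le_iff₀ (Gamma_pos_of_pos hs)]
  linarith

theorem pow_div_Gamma_div_le {κ T : ℝ} (hκ : 0 < κ) (hT : 0 ≤ T) {n : ℕ} (hn : 0 < n) :
    T ^ n / Gamma (n / κ) ≤ n / κ * exp (T ^ κ) := by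
  have hpow : (T ^ κ) ^ ((n : ℝ) / κ) = T ^ n := by
    rw [← rpow_mul hT, mul_div_cancel₀ _ hκ.ne', rpow_natCast]
  rw [← hpow]
  exact rpow_div_Gamma_le (by positivity) (by positivity)

theorem max_one_rpow_le {x κ : ℝ} (hx : 0 ≤ x) :
    max 1 x ^ κ ≤ 1 + x ^ κ := by
  rcases le_total 1 x with h | h
  · rw [max_eq_right h]; linarith
  · rw [max_eq_left h, one_rpow]; linarith [rpow_nonneg hx κ]

end Real

theorem hasSum_succ_mul_half_pow :
    HasSum (fun n : ℕ => ((n : ℝ) + 1) * (1 / 2) ^ (n + 1)) 2 := by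
  have h := hasSum_coe_mul_geometric_of_norm_lt_one (𝕜 := ℝ) (r := 1 / 2) (by norm_num)
  rw [← hasSum_nat_add_iff' 1] at h
  norm_num at h
  exact h

theorem gevrey_term_le {κ c A ξ : ℝ} (hκ : 0 < κ) (hA : 0 ≤ A) (hξ : 0 < ξ) (n : ℕ) :
    A ^ (n + 1) * ξ ^ ((n + 1 : ℝ) - κ) * exp (c * ξ ^ κ) / Gamma ((n + 1) / κ)
      ≤ exp ((2 * A) ^ κ) / κ * ξ ^ (1 - κ) * exp ((c + (2 * A) ^ κ) * ξ ^ κ)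
          * ((n + 1) * (1 / 2) ^ (n + 1)) := by
  set T := A * max 1 ξ
  have hsplit : A ^ (n + 1) * ξ ^ ((n + 1 : ℝ) - κ) = ξ ^ (1 - κ) * (A * (A * ξ) ^ n) := by
    rw [show (n + 1 : ℝ) - κ = n + (1 - κ) by ring, rpow_add hξ, rpow_natCast]
    ring
  have hdom : A * (A * ξ) ^ n ≤ T ^ (n + 1) := by
    rw [pow_succ']
    gcongr
    · exact le_mul_of_one_le_right hA (le_max_left 1 ξ)
    · exact mul_le_mul_of_nonneg_left (le_max_right 1 ξ) hA
  have hGamma : (2 * T) ^ (n + 1) / Gamma ((n + 1) / κ) ≤ (n + 1) / κ * exp ((2 * T) ^ κ) := by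
    exact_mod_cast pow_div_Gamma_div_le hκ (by positivity : 0 ≤ 2 * T) n.succ_pos
  have hgrowth : (2 * T) ^ κ ≤ (2 * A) ^ κ + (2 * A) ^ κ * ξ ^ κ := by
    rw [← mul_assoc, mul_rpow (by positivity) (by positivity)]
    calc (2 * A) ^ κ * max 1 ξ ^ κ ≤ (2 * A) ^ κ * (1 + ξ ^ κ) := by
          gcongr; exact max_one_rpow_le hξ.le
      _ = _ := by ring
  calc A ^ (n + 1) * ξ ^ ((n + 1 : ℝ) - κ) * exp (c * ξ ^ κ) / Gamma ((n + 1) / κ)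
      = ξ ^ (1 - κ) * exp (c * ξ ^ κ) * (A * (A * ξ) ^ n) / Gamma ((n + 1) / κ) := by
        rw [hsplit]; ring
    _ ≤ ξ ^ (1 - κ) * exp (c * ξ ^ κ) * ((1 / 2) ^ (n + 1) * (2 * T) ^ (n + 1))
          / Gamma ((n + 1) / κ) := by
        rw [← mul_pow, one_div, inv_mul_cancel_left₀ two_ne_zero]
        gcongr
    _ = ξ ^ (1 - κ) * exp (c * ξ ^ κ) * (1 / 2) ^ (n + 1)
          * ((2 * T) ^ (n + 1) / Gamma ((n + 1) / κ)) := by ring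
    _ ≤ ξ ^ (1 - κ) * exp (c * ξ ^ κ) * (1 / 2) ^ (n + 1)
          * ((n + 1) / κ * exp ((2 * A) ^ κ + (2 * A) ^ κ * ξ ^ κ)) := by
        gcongr
        exact hGamma.trans (by gcongr)
    _ = _ := by rw [add_mul, exp_add, exp_add]; ring

theorem stmt_2_general (κ c A : ℝ) (hκ : 0 < κ) (hA : 0 < A) :
    (∀ ξ : ℝ, 0 < ξ →
        Summable (fun m : ℕ =>
          A ^ (m + 1) * ξ ^ ((m + 1 : ℝ) - κ) * Real.exp (c * ξ ^ κ)
            / Real.Gamma ((m + 1) / κ))) ∧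
    ∃ M : ℝ, 0 < M ∧ ∃ c' : ℝ, c ≤ c' ∧ ∀ ξ : ℝ, 0 < ξ →
      (∑' m : ℕ,
          A ^ (m + 1) * ξ ^ ((m + 1 : ℝ) - κ) * Real.exp (c * ξ ^ κ)
            / Real.Gamma ((m + 1) / κ))
        ≤ M * ξ ^ ((1 : ℝ) - κ) * Real.exp (c' * ξ ^ κ) := by
  have hbound := fun ξ (hξ : 0 < ξ) => gevrey_term_le (c := c) hκ hA.le hξ
  have hmajorant := fun ξ : ℝ => (hasSum_succ_mul_half_pow.summable.mul_left
    (exp ((2 * A) ^ κ) / κ * ξ ^ (1 - κ) * exp ((c + (2 * A) ^ κ) * ξ ^ κ)))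
  have hsummable : ∀ ξ : ℝ, 0 < ξ → Summable (fun m : ℕ =>
      A ^ (m + 1) * ξ ^ ((m + 1 : ℝ) - κ) * exp (c * ξ ^ κ) / Gamma ((m + 1) / κ)) :=
    fun ξ hξ => (hmajorant ξ).of_nonneg_of_le
      (fun m => div_nonneg (by positivity) (Gamma_pos_of_pos (by positivity)).le) (hbound ξ hξ)
  refine ⟨hsummable, 2 * (exp ((2 * A) ^ κ) / κ), by positivity, c + (2 * A) ^ κ,
    le_add_of_nonneg_right (by positivity), fun ξ hξ => ?_⟩
  calc _ ≤ _ := (hsummable ξ hξ).tsum_le_tsum (hbound ξ hξ) (hmajorant ξ)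
    _ = _ := by rw [tsum_mul_left, hasSum_succ_mul_half_pow.tsum_eq]; ring

/-- Summation of the Gevrey-type majorant series: for κ > 0, c ≥ 0, A > 0, the series
Σ_{m≥1} A^m ξ^{m−κ} e^{cξ^κ}/Γ(m/κ) converges for each ξ > 0 and admits a uniform
bound M ξ^{1−κ} e^{c'ξ^κ}. -/
theorem stmt_2 (κ c A : ℝ) (hκ : 0 < κ) (hc : 0 ≤ c) (hA : 0 < A) :
    (∀ ξ : ℝ, 0 < ξ →
        Summable (fun m : ℕ =>
          A ^ (m + 1) * ξ ^ ((m + 1 : ℝ) - κ) * Real.exp (c * ξ ^ κ)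
            / Real.Gamma ((m + 1) / κ))) ∧
    ∃ M : ℝ, 0 < M ∧ ∃ c' : ℝ, c ≤ c' ∧ ∀ ξ : ℝ, 0 < ξ →
      (∑' m : ℕ,
          A ^ (m + 1) * ξ ^ ((m + 1 : ℝ) - κ) * Real.exp (c * ξ ^ κ)
            / Real.Gamma ((m + 1) / κ))
        ≤ M * ξ ^ ((1 : ℝ) - κ) * Real.exp (c' * ξ ^ κ) :=
  stmt_2_general κ c A hκ hA
end
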